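/- arXiv:2511.17128 — 9 statements merged into one kernel-verified Lean document; each statement's English description precedes it below -/
import Mathlib

section
/- Let I be a finite set and p_i ∈ [0,1] for i ∈ I, with p_0 := 0. Then for every z ∈ {0,1}^I, max_{i∈I} p_i z_i = min over ℓ ∈ {0} ∪ I of (p_ℓ + ∑_{i∈I} max(p_i - p_ℓ, 0) · z_i). -/
/-!
For `q ≥ 0` and `z ∈ [0,1]` one has `a z ≤ q + (a - q)⁺ z`, so every term `p_j z_j` is bounded by
every candidate on the right. Conversely the maximum `M` is itself `p_ℓ` for some `ℓ` (`ℓ = 0` when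
`M = 0`), and since `z` is `{0,1}`-valued, `p_i ≤ M` whenever `z_i = 1`, so all the positive parts
in the candidate for `ℓ` vanish and it equals `M`.
-/

open Finset

lemma mul_le_add_max_sub_mul {a q z : ℝ} (hq : 0 ≤ q) (hz₀ : 0 ≤ z) (hz₁ : z ≤ 1) :
    a * z ≤ q + max (a - q) 0 * z := by
  rcases le_total a q with h | h
  · rw [max_eq_right (by linarith)]
    nlinarith
  · rw [max_eq_left (by linarith)]
    nlinarith

lemma mul_le_add_sum_max_sub_mul {ι : Type*} [Fintype ι] {p z : ι → ℝ} {q : ℝ} (hq : 0 ≤ q)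
    (hz : ∀ i, z i ∈ Set.Icc (0 : ℝ) 1) (j : ι) :
    p j * z j ≤ q + ∑ i, max (p i - q) 0 * z i := by
  have hterm : ∀ i, 0 ≤ max (p i - q) 0 * z i := fun i =>
    mul_nonneg (le_max_right _ _) (hz i).1
  calc p j * z j ≤ q + max (p j - q) 0 * z j := mul_le_add_max_sub_mul hq (hz j).1 (hz j).2
    _ ≤ q + ∑ i, max (p i - q) 0 * z i := by
      gcongr
      exact single_le_sum (fun i _ => hterm i) (mem_univ j)

lemma sum_max_sub_mul_eq_zero {ι : Type*} [Fintype ι] {p z : ι → ℝ} {q : ℝ}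
    (hz : ∀ i, z i = 0 ∨ z i = 1) (hpq : ∀ i, p i * z i ≤ q) :
    ∑ i, max (p i - q) 0 * z i = 0 := by
  refine sum_eq_zero fun i _ => ?_
  rcases hz i with h | h
  · simp [h]
  · have := hpq i
    rw [h, mul_one] at this ⊢
    exact max_eq_right (by linarith)

lemma exists_option_elim_eq_sup'_mul {ι : Type*} [Fintype ι] [Nonempty ι] (p z : ι → ℝ)
    (hz : ∀ i, z i = 0 ∨ z i = 1) :
    ∃ ℓ : Option ι, ℓ.elim 0 p = univ.sup' univ_nonempty (fun i => p i * z i) := by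
  obtain ⟨j, -, hj⟩ := exists_mem_eq_sup' univ_nonempty (fun i => p i * z i)
  rcases hz j with h | h
  · exact ⟨none, by simp [hj, h]⟩
  · exact ⟨some j, by simp [hj, h]⟩

theorem stmt1 {I : Type*} [Fintype I] [Nonempty I] (p : I → ℝ)
    (hp : ∀ i, p i ∈ Set.Icc (0:ℝ) 1) (z : I → ℝ) (hz : ∀ i, z i = 0 ∨ z i = 1) :
    univ.sup' univ_nonempty (fun i => p i * z i) =
      univ.inf' univ_nonempty (fun ℓ : Option I =>
        (ℓ.elim 0 p) + ∑ i, max (p i - ℓ.elim 0 p) 0 * z i) := by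
  have hz01 : ∀ i, z i ∈ Set.Icc (0 : ℝ) 1 := fun i => by
    rcases hz i with h | h <;> simp [h]
  apply le_antisymm
  · refine le_inf' _ _ fun ℓ _ => sup'_le _ _ fun j _ => mul_le_add_sum_max_sub_mul ?_ hz01 j
    cases ℓ with
    | none => exact le_rfl
    | some i => exact (hp i).1
  · obtain ⟨ℓ, hℓ⟩ := exists_option_elim_eq_sup'_mul p z hz
    refine inf'_le_of_le _ (mem_univ ℓ) ?_
    rw [hℓ, sum_max_sub_mul_eq_zero hz fun i => le_sup' (fun i => p i * z i) (mem_univ i),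
      add_zero]
end

section
/- Let p ∈ [0,1), K ≥ 2 an integer, and k ∈ {1,…,K-1}. Define h_k(y,z) = p(1-p)^k · y + (1 - (1-p)^k(kp+1)) · z. Then for all integers y ≥ 0 and z ∈ {0,1} with z ≤ y ≤ Kz, one has 1 - (1-p)^y ≤ h_k(y,z). -/
lemma aux_one_add_mul_pow (p : ℝ) (hp0 : 0 ≤ p) (hp1 : p ≤ 1) :
    ∀ m : ℕ, (1 + (m : ℝ) * p) * (1 - p) ^ m ≤ 1 := by
  intro m
  induction m with
  | zero => simp
  | succ n ih =>
    have hq : (0:ℝ) ≤ 1 - p := by linarith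
    have hqn : (0:ℝ) ≤ (1 - p) ^ n := pow_nonneg hq n
    have step : (1 + ((n:ℝ) + 1) * p) * (1 - p) ≤ 1 + (n:ℝ) * p := by nlinarith [sq_nonneg p, mul_nonneg (Nat.cast_nonneg n : (0:ℝ) ≤ (n:ℝ)) (sq_nonneg p)]
    calc (1 + ((n+1 : ℕ) : ℝ) * p) * (1 - p) ^ (n+1)
        = ((1 + ((n:ℝ) + 1) * p) * (1 - p)) * (1 - p) ^ n := by push_cast; ring
      _ ≤ (1 + (n:ℝ) * p) * (1 - p) ^ n := by
          apply mul_le_mul_of_nonneg_right step hqn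
      _ ≤ 1 := ih

theorem stmt3 (p : ℝ) (hp : 0 ≤ p ∧ p < 1) (K : ℕ) (hK : 2 ≤ K)
    (k : ℕ) (hk : 1 ≤ k ∧ k ≤ K - 1) (y z : ℕ) (hz : z ≤ 1)
    (h1 : z ≤ y) (h2 : y ≤ K * z) :
    1 - (1 - p) ^ y ≤
      p * (1 - p) ^ k * (y : ℝ) + (1 - (1 - p) ^ k * ((k : ℝ) * p + 1)) * (z : ℝ) := by
  obtain ⟨hp0, hp1⟩ := hp
  have hq : (0:ℝ) ≤ 1 - p := by linarith
  interval_cases z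
  · have hy : y = 0 := by omega
    subst hy; simp
  · have key : (1 - p) ^ k * (1 + ((k:ℝ) - (y:ℝ)) * p) ≤ (1 - p) ^ y := by
      rcases le_total y k with h | h
      · obtain ⟨m, rfl⟩ := Nat.exists_eq_add_of_le h
        have lemA := aux_one_add_mul_pow p hp0 (le_of_lt hp1) m
        have hqy : (0:ℝ) ≤ (1 - p) ^ y := pow_nonneg hq y
        have : ((y + m : ℕ) : ℝ) - (y : ℝ) = (m : ℝ) := by push_cast; ring
        rw [this, pow_add]
        nlinarith
      · obtain ⟨m, rfl⟩ := Nat.exists_eq_add_of_le h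
        have lemB : 1 - (m:ℝ) * p ≤ (1 - p) ^ m := by
          have := one_add_mul_le_pow (by linarith : (-2:ℝ) ≤ -p) m
          have h2 : (1 : ℝ) + (m:ℝ) * (-p) = 1 - (m:ℝ) * p := by ring
          rw [h2] at this
          simpa [sub_eq_add_neg] using this
        have hqk : (0:ℝ) ≤ (1 - p) ^ k := pow_nonneg hq k
        have : ((k : ℝ) - ((k + m : ℕ) : ℝ)) = -(m : ℝ) := by push_cast; ring
        rw [this, pow_add]
        nlinarith
    push_cast
    nlinarith [key]
end

section
/- Let I_P be a finite set, p_i ∈ [0,1) for i ∈ I_P, K ≥ 2 an integer, C ⊆ I_P, and k_i ∈ {1,…,K-1} for i ∈ I_P \ C. Define p_C = ∏_{i∈C}(1-p_i) and h_{i,k}(y,z) = p_i(1-p_i)^k y + (1 - (1-p_i)^k(k p_i + 1)) z. Then for all (η, y, z) with y_i ∈ ℤ_{≥0}, z_i ∈ {0,1}, z_i ≤ y_i ≤ K z_i for all i, and η ≤ 1 - ∏_{i∈I_P}(1-p_i)^{y_i}, the subadditive inequality η ≤ 1 - p_C + p_C · (∑_{i∈I_P\C} h_{i,k_i}(y_i,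 z_i) + ∑_{i∈C} p_i (y_i - z_i)) holds. -/
open Finset

/-- Bernoulli: `1 - n*p ≤ (1-p)^n` for `p ≤ 2`. -/
lemma bern (p : ℝ) (hp : p ≤ 2) (n : ℕ) : 1 - (n : ℝ) * p ≤ (1 - p) ^ n := by
  have := one_add_mul_le_pow (a := -p) (by linarith) n
  have h1 : 1 + (n:ℝ) * (-p) = 1 - (n:ℝ) * p := by ring
  have h2 : (1 + -p) = (1 - p) := by ring
  rw [h1, h2] at this
  exact this

lemma bern2 (p : ℝ) (hp0 : 0 ≤ p) (hp1 : p ≤ 1) (m : ℕ) :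
    (1 - p) ^ m * (1 + (m : ℝ) * p) ≤ 1 := by
  have h1 : 1 + (m:ℝ) * p ≤ (1 + p) ^ m := one_add_mul_le_pow (by linarith) m
  have h2 : (0:ℝ) ≤ (1 - p) ^ m := pow_nonneg (by linarith) m
  calc (1 - p) ^ m * (1 + (m : ℝ) * p) ≤ (1 - p) ^ m * (1 + p) ^ m :=
        mul_le_mul_of_nonneg_left h1 h2
    _ = ((1 - p) * (1 + p)) ^ m := (mul_pow _ _ _).symm
    _ = (1 - p ^ 2) ^ m := by ring_nf
    _ ≤ 1 ^ m := pow_le_pow_left₀ (by nlinarith) (by nlinarith) m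
    _ = 1 := one_pow m

/-- Secant bound: for integers `y`, the secant line of `y ↦ (1-p)^y` between `k` and `k+1`
lies below. -/
lemma secant (p : ℝ) (hp0 : 0 ≤ p) (hp1 : p < 1) (kk y : ℕ) :
    (1 - p) ^ kk * (1 - p * ((y : ℝ) - kk)) ≤ (1 - p) ^ y := by
  have hq0 : (0:ℝ) < 1 - p := by linarith
  rcases le_or_gt kk y with h | h
  · have hb := bern p (by linarith) (y - kk)
    have hcast : ((y - kk : ℕ) : ℝ) = (y : ℝ) - kk := by
      push_cast [Nat.cast_sub h]; ring
    have : (1 - p) ^ y = (1 - p) ^ kk * (1 - p) ^ (y - kk) := by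
      rw [← pow_add]; congr 1; omega
    rw [this]
    apply mul_le_mul_of_nonneg_left _ (pow_nonneg hq0.le kk)
    rw [hcast] at hb
    linarith
  · have hb := bern2 p hp0 hp1.le (kk - y)
    have hcast : ((kk - y : ℕ) : ℝ) = (kk : ℝ) - y := by
      push_cast [Nat.cast_sub h.le]; ring
    have hsplit : (1 - p) ^ kk = (1 - p) ^ y * (1 - p) ^ (kk - y) := by
      rw [← pow_add]; congr 1; omega
    rw [hsplit]
    have hy0 : (0:ℝ) ≤ (1 - p) ^ y := pow_nonneg hq0.le y
    rw [hcast] at hb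
    nlinarith [pow_nonneg hq0.le (kk - y)]

/-- Weierstrass-type product inequality. -/
lemma weier {I : Type*} [DecidableEq I] (s : Finset I) (x c : I → ℝ)
    (hx : ∀ i ∈ s, 0 ≤ x i ∧ x i ≤ 1) (hc : ∀ i ∈ s, 1 - x i ≤ c i) :
    1 - ∑ i ∈ s, c i ≤ ∏ i ∈ s, x i := by
  induction s using Finset.induction with
  | empty => simp
  | @insert a s ha ih =>
    rw [Finset.sum_insert ha, Finset.prod_insert ha]
    have hP0 : (0:ℝ) ≤ ∏ i ∈ s, x i :=
      Finset.prod_nonneg (fun i hi => (hx i (Finset.mem_insert_of_mem hi)).1)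
    have hP1 : ∏ i ∈ s, x i ≤ 1 :=
      Finset.prod_le_one (fun i hi => (hx i (Finset.mem_insert_of_mem hi)).1)
        (fun i hi => (hx i (Finset.mem_insert_of_mem hi)).2)
    have hih : 1 - ∑ i ∈ s, c i ≤ ∏ i ∈ s, x i :=
      ih (fun i hi => hx i (Finset.mem_insert_of_mem hi))
        (fun i hi => hc i (Finset.mem_insert_of_mem hi))
    have hxa := hx a (Finset.mem_insert_self a s)
    have hca := hc a (Finset.mem_insert_self a s)
    nlinarith [hxa.1, hxa.2]

theorem stmt5 {I : Type*} [Fintype I] [DecidableEq I] (p : I → ℝ)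
    (hp : ∀ i, 0 ≤ p i ∧ p i < 1) (K : ℕ) (hK : 2 ≤ K)
    (C : Finset I) (k : I → ℕ) (hk : ∀ i ∉ C, 1 ≤ k i ∧ k i ≤ K - 1)
    (η : ℝ) (y z : I → ℕ) (hz : ∀ i, z i ≤ 1)
    (hzy : ∀ i, z i ≤ y i) (hyK : ∀ i, y i ≤ K * z i)
    (hη : η ≤ 1 - ∏ i, (1 - p i) ^ (y i)) :
    η ≤ 1 - (∏ i ∈ C, (1 - p i)) + (∏ i ∈ C, (1 - p i)) *
      ((∑ i ∈ univ \ C, (p i * (1 - p i) ^ (k i) * (y i : ℝ) +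
          (1 - (1 - p i) ^ (k i) * ((k i : ℝ) * p i + 1)) * (z i : ℝ))) +
        ∑ i ∈ C, p i * ((y i : ℝ) - (z i : ℝ))) := by
  have hq0 : ∀ i, (0:ℝ) < 1 - p i := fun i => by linarith [(hp i).2]
  have hq1 : ∀ i, (1:ℝ) - p i ≤ 1 := fun i => by linarith [(hp i).1]
  set x : I → ℝ := fun i => if i ∈ C then (1 - p i) ^ (y i - z i) else (1 - p i) ^ (y i)
    with hxdef
  set c : I → ℝ := fun i => if i ∈ C then p i * ((y i : ℝ) - (z i : ℝ))
      else p i * (1 - p i) ^ (k i) * (y i : ℝ) +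
          (1 - (1 - p i) ^ (k i) * ((k i : ℝ) * p i + 1)) * (z i : ℝ) with hcdef
  -- bounds on x
  have hx : ∀ i ∈ (univ : Finset I), 0 ≤ x i ∧ x i ≤ 1 := by
    intro i _
    simp only [hxdef]
    split <;>
      exact ⟨pow_nonneg (hq0 i).le _, pow_le_one₀ (hq0 i).le (hq1 i)⟩
  -- per-index bounds 1 - x i ≤ c i
  have hc : ∀ i ∈ (univ : Finset I), 1 - x i ≤ c i := by
    intro i _
    simp only [hxdef, hcdef]
    by_cases hiC : i ∈ C
    · simp only [if_pos hiC]
      have hb := bern (p i) (by linarith [(hp i).2]) (y i - z i)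
      have hcast : ((y i - z i : ℕ) : ℝ) = (y i : ℝ) - z i := by
        push_cast [Nat.cast_sub (hzy i)]; ring
      rw [hcast] at hb
      linarith
    · simp only [if_neg hiC]
      have h1 := hz i; have h2 := hzy i; have h3 := hyK i
      interval_cases hzi : z i
      · -- z i = 0, hence y i = 0
        have hy0 : y i = 0 := by have := hyK i; omega
        simp [hy0]
      · -- z i = 1
        have hs := secant (p i) (hp i).1 (hp i).2 (k i) (y i)
        have h1 : (1 - p i) ^ (k i) * (1 - p i * ((y i : ℝ) - k i))
            = (1 - p i) ^ (k i) * ((k i : ℝ) * p i + 1) - p i * (1 - p i) ^ (k i) * (y i) := by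
          ring
        push_cast
        nlinarith [hs]
  have hX : 1 - ∑ i, c i ≤ ∏ i, x i := weier univ x c hx hc
  -- product splitting
  have hCsub : C ⊆ univ := subset_univ C
  have hsum : ∑ i, c i =
      (∑ i ∈ univ \ C, (p i * (1 - p i) ^ (k i) * (y i : ℝ) +
          (1 - (1 - p i) ^ (k i) * ((k i : ℝ) * p i + 1)) * (z i : ℝ))) +
        ∑ i ∈ C, p i * ((y i : ℝ) - (z i : ℝ)) := by
    rw [← Finset.sum_sdiff hCsub]
    congr 1
    · exact Finset.sum_congr rfl (fun i hi => by
        simp only [hcdef, if_neg (Finset.mem_sdiff.mp hi).2])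
    · exact Finset.sum_congr rfl (fun i hi => by simp only [hcdef, if_pos hi])
  have hxprod : ∏ i, x i =
      (∏ i ∈ C, (1 - p i) ^ (y i - z i)) * ∏ i ∈ univ \ C, (1 - p i) ^ (y i) := by
    rw [← Finset.prod_sdiff hCsub, mul_comm]
    congr 1
    · exact Finset.prod_congr rfl (fun i hi => by simp only [hxdef, if_pos hi])
    · exact Finset.prod_congr rfl (fun i hi => by
        simp only [hxdef, if_neg (Finset.mem_sdiff.mp hi).2])
  have hyprod : ∏ i, (1 - p i) ^ (y i) =
      (∏ i ∈ C, (1 - p i) ^ (y i)) * ∏ i ∈ univ \ C, (1 - p i) ^ (y i) := by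
    rw [← Finset.prod_sdiff hCsub, mul_comm]
  -- key: pC * ∏ x ≤ ∏ (1-p)^y
  have hkey : (∏ i ∈ C, (1 - p i)) * ∏ i, x i ≤ ∏ i, (1 - p i) ^ (y i) := by
    rw [hxprod, hyprod, ← mul_assoc, ← Finset.prod_mul_distrib]
    apply mul_le_mul_of_nonneg_right _
      (Finset.prod_nonneg (fun i _ => pow_nonneg (hq0 i).le _))
    apply Finset.prod_le_prod
    · intro i _
      exact mul_nonneg (hq0 i).le (pow_nonneg (hq0 i).le _)
    · intro i _
      have h1 := hz i; have h2 := hzy i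
      have hsplit : (1 - p i) ^ (y i) = (1 - p i) ^ (z i) * (1 - p i) ^ (y i - z i) := by
        rw [← pow_add]; congr 1; omega
      rw [hsplit]
      apply mul_le_mul_of_nonneg_right _ (pow_nonneg (hq0 i).le _)
      interval_cases hzi : z i
      · simpa using (hq1 i)
      · simp
  have hpC0 : (0:ℝ) ≤ ∏ i ∈ C, (1 - p i) :=
    Finset.prod_nonneg (fun i _ => (hq0 i).le)
  have hfin : (∏ i ∈ C, (1 - p i)) * (1 - ∑ i, c i) ≤ ∏ i, (1 - p i) ^ (y i) :=
    le_trans (mul_le_mul_of_nonneg_left hX hpC0) hkey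
  rw [hsum] at hfin
  nlinarith [hfin]
end

section
/- Let I_P be finite, p_i ∈ [0,1) for i ∈ I_P, and let Φ̂(y) = 1 - ∏_{i∈I_P}(1-p_i)^{y_i} defined for y ∈ ℝ_{≥0}^{I_P}. For any y* ∈ ℤ_{≥0}^{I_P}, define c(y*) = 1 - ∏_{i∈I_P}(1-p_i)^{y*_i} + (∏_{ℓ∈I_P}(1-p_ℓ)^{y*_ℓ}) · ∑_{i∈I_P} ln(1-p_i) · y*_i. Then 0 ≤ c(y*) ≤ 1. -/
/-!
Write `P = ∏ i, (1 - p i) ^ (ys i)`. The sum in `c(y*)` is `log P`, so `c(y*) = 1 - P + P log P`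
with `0 < P ≤ 1`. The lower bound is the tangent-line inequality `P - 1 ≤ P log P` for `x ↦ x log x`
(equivalently, concavity of `Φ̂` along the ray through `y*`); the upper bound is `P log P ≤ 0`.
-/

open Finset Real

lemma sum_log_mul_eq_log_prod_pow {ι : Type*} (s : Finset ι) {a : ι → ℝ}
    (ha : ∀ i ∈ s, a i ≠ 0) (n : ι → ℕ) :
    ∑ i ∈ s, log (a i) * n i = log (∏ i ∈ s, a i ^ n i) := by
  rw [log_prod fun i hi => pow_ne_zero _ (ha i hi)]
  exact sum_congr rfl fun i _ => by rw [log_pow, mul_comm]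

lemma one_sub_add_mul_log_nonneg {x : ℝ} (hx : 0 ≤ x) : 0 ≤ 1 - x + x * log x := by
  linarith [self_sub_one_le_mul_log hx]

lemma one_sub_add_mul_log_le_one {x : ℝ} (hx₀ : 0 ≤ x) (hx₁ : x ≤ 1) :
    1 - x + x * log x ≤ 1 := by
  linarith [mul_log_nonpos hx₀ hx₁]

theorem stmt7 {I : Type*} [Fintype I] (p : I → ℝ)
    (hp : ∀ i, 0 ≤ p i ∧ p i < 1) (ys : I → ℕ) :
    0 ≤ 1 - (∏ i, (1 - p i) ^ (ys i)) +
        (∏ i, (1 - p i) ^ (ys i)) * ∑ i, Real.log (1 - p i) * (ys i : ℝ) ∧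
    1 - (∏ i, (1 - p i) ^ (ys i)) +
        (∏ i, (1 - p i) ^ (ys i)) * ∑ i, Real.log (1 - p i) * (ys i : ℝ) ≤ 1 := by
  have hq_pos : ∀ i, 0 < 1 - p i := fun i => sub_pos.mpr (hp i).2
  have hq_le_one : ∀ i, 1 - p i ≤ 1 := fun i => sub_le_self _ (hp i).1
  rw [sum_log_mul_eq_log_prod_pow _ (fun i _ => (hq_pos i).ne')]
  have hP_nonneg : 0 ≤ ∏ i, (1 - p i) ^ ys i :=
    prod_nonneg fun i _ => pow_nonneg (hq_pos i).le _
  have hP_le_one : ∏ i, (1 - p i) ^ ys i ≤ 1 :=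
    prod_le_one (fun i _ => pow_nonneg (hq_pos i).le _)
      fun i _ => pow_le_one₀ (hq_pos i).le (hq_le_one i)
  exact ⟨one_sub_add_mul_log_nonneg hP_nonneg, one_sub_add_mul_log_le_one hP_nonneg hP_le_one⟩
end

section
/- Let p ∈ [0,1), K ≥ 2, and h_k(y,z) = p(1-p)^k y + (1-(1-p)^k(kp+1)) z for k ∈ {1,…,K-1}. Let y* ≥ 0 and z* ∈ [0,1] be reals with z* ≤ y* ≤ K z*. Define k* = ⌊y*/z*⌋ if z* > 0 and k* = 1 otherwise. Then h_{k*}(y*, z*) = min{h_k(y*, z*) : k ∈ {1,…,K-1}} and h_{k*}(y*, z*) ≥ 0. -/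
/-- The secant-line upper bound `h_k(y,z)` of `y ↦ 1-(1-p)^y`. -/
noncomputable def hsec (p : ℝ) (ys zs : ℝ) (k : ℕ) : ℝ :=
  p * (1 - p) ^ k * ys + (1 - (1 - p) ^ k * ((k : ℝ) * p + 1)) * zs

lemma hsec_diff (p ys zs : ℝ) (k : ℕ) :
    hsec p ys zs (k + 1) - hsec p ys zs k
      = p ^ 2 * (1 - p) ^ k * (((k : ℝ) + 1) * zs - ys) := by
  simp only [hsec, pow_succ]
  push_cast
  ring

lemma hsec_nonneg (p ys zs : ℝ) (hp0 : 0 ≤ p) (hp1 : p < 1) (hz : 0 ≤ zs)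
    (n : ℕ) (hn : (n : ℝ) * zs ≤ ys) : 0 ≤ hsec p ys zs n := by
  have hq0 : (0:ℝ) ≤ (1 - p) ^ n := pow_nonneg (by linarith) n
  have hq1 : (1 - p) ^ n ≤ 1 := pow_le_one₀ (by linarith) (by linarith)
  have h1 : 0 ≤ p * (1 - p) ^ n * (ys - (n : ℝ) * zs) :=
    mul_nonneg (mul_nonneg hp0 hq0) (by linarith)
  have h2 : 0 ≤ zs * (1 - (1 - p) ^ n) := mul_nonneg hz (by linarith)
  simp only [hsec]
  nlinarith [h1, h2]

theorem stmt10 (p : ℝ) (hp : 0 ≤ p ∧ p < 1) (K : ℕ) (hK : 2 ≤ K)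
    (ys zs : ℝ) (hy : 0 ≤ ys) (hz : 0 ≤ zs ∧ zs ≤ 1)
    (h1 : zs ≤ ys) (h2 : ys ≤ (K : ℝ) * zs) :
    hsec p ys zs (if 0 < zs then ⌊ys / zs⌋₊ else 1) =
      (Finset.Icc 1 (K - 1)).inf' (Finset.nonempty_Icc.mpr (by omega)) (hsec p ys zs) ∧
    0 ≤ hsec p ys zs (if 0 < zs then ⌊ys / zs⌋₊ else 1) := by
  obtain ⟨hp0, hp1⟩ := hp
  obtain ⟨hz0, hz1⟩ := hz
  by_cases hzs : 0 < zs
  · simp only [if_pos hzs]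
    set t := ⌊ys / zs⌋₊ with ht
    have hq0 : (0:ℝ) ≤ 1 - p := by linarith
    have hdiv_le : ys / zs ≤ (K : ℝ) := by
      rw [div_le_iff₀ hzs]; linarith
    have hdiv_ge : (1:ℝ) ≤ ys / zs := by
      rw [le_div_iff₀ hzs]; linarith
    have ht1 : 1 ≤ t := Nat.le_floor (by exact_mod_cast hdiv_ge)
    have htK : t ≤ K := by
      have h' : (t : ℝ) ≤ (K : ℝ) :=
        le_trans (Nat.floor_le (div_nonneg hy hz0)) hdiv_le
      exact_mod_cast h'
    have ht_le : (t : ℝ) ≤ ys / zs := Nat.floor_le (div_nonneg hy hz0)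
    have ht_lt : ys / zs < (t : ℝ) + 1 := Nat.lt_floor_add_one _
    have htz : (t : ℝ) * zs ≤ ys := (le_div_iff₀ hzs).mp ht_le
    have hzt : ys < ((t : ℝ) + 1) * zs := (div_lt_iff₀ hzs).mp ht_lt
    -- one-step monotonicity
    have step_le : ∀ k, k + 1 ≤ t → hsec p ys zs (k + 1) ≤ hsec p ys zs k := by
      intro k hk
      have hk' : ((k : ℝ) + 1) ≤ (t : ℝ) := by exact_mod_cast hk
      have hks : ((k : ℝ) + 1) * zs ≤ ys :=
        le_trans (mul_le_mul_of_nonneg_right hk' hz0) htz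
      have hd := hsec_diff p ys zs k
      have hneg : p ^ 2 * (1 - p) ^ k * (((k : ℝ) + 1) * zs - ys) ≤ 0 :=
        mul_nonpos_of_nonneg_of_nonpos (by positivity) (by linarith)
      linarith
    have step_ge : ∀ k, t ≤ k → hsec p ys zs k ≤ hsec p ys zs (k + 1) := by
      intro k hk
      have hk' : (t : ℝ) ≤ (k : ℝ) := by exact_mod_cast hk
      have hks : ys ≤ ((k : ℝ) + 1) * zs := by
        have : ((t : ℝ) + 1) * zs ≤ ((k : ℝ) + 1) * zs :=
          mul_le_mul_of_nonneg_right (by linarith) hz0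
        linarith
      have hd := hsec_diff p ys zs k
      have hpos : 0 ≤ p ^ 2 * (1 - p) ^ k * (((k : ℝ) + 1) * zs - ys) :=
        mul_nonneg (by positivity) (by linarith)
      linarith
    have A : ∀ i j : ℕ, i ≤ j → j ≤ t → hsec p ys zs j ≤ hsec p ys zs i := by
      intro i j hij
      induction j, hij using Nat.le_induction with
      | base => intro _; exact le_rfl
      | succ j hij ih =>
        intro hjt
        exact le_trans (step_le j hjt) (ih (le_trans (Nat.le_succ j) hjt))
    have B : ∀ i j : ℕ, t ≤ i → i ≤ j → hsec p ys zs i ≤ hsec p ys zs j := by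
      intro i j hti hij
      induction j, hij using Nat.le_induction with
      | base => exact le_rfl
      | succ j hij ih =>
        exact le_trans ih (step_ge j (le_trans hti hij))
    by_cases htK' : t ≤ K - 1
    · have hmem : t ∈ Finset.Icc 1 (K - 1) := Finset.mem_Icc.mpr ⟨ht1, htK'⟩
      refine ⟨le_antisymm ?_ (Finset.inf'_le _ hmem), hsec_nonneg p ys zs hp0 hp1 hz0 t htz⟩
      apply Finset.le_inf'
      intro k hk
      rcases le_total k t with h | h
      · exact A k t h le_rfl
      · exact B t k le_rfl h
    · have htK2 : t = K := by omega
      have heq : ys / zs = (K : ℝ) := le_antisymm hdiv_le (by rw [← htK2]; exact ht_le)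
      have hys : ys = (K : ℝ) * zs := by
        field_simp at heq
        linarith [heq]
      have hKK : K - 1 + 1 = K := by omega
      have heqh : hsec p ys zs K = hsec p ys zs (K - 1) := by
        have hd := hsec_diff p ys zs (K - 1)
        rw [hKK] at hd
        have hc : ((↑(K - 1) : ℝ) + 1) * zs - ys = 0 := by
          rw [hys, Nat.cast_sub (by omega : 1 ≤ K)]
          push_cast
          ring
        rw [hc, mul_zero] at hd
        linarith
      have hmem : K - 1 ∈ Finset.Icc 1 (K - 1) := Finset.mem_Icc.mpr ⟨by omega, le_rfl⟩
      rw [htK2, heqh]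
      have hK1z : ((K - 1 : ℕ) : ℝ) * zs ≤ ys := by
        rw [hys, Nat.cast_sub (by omega : 1 ≤ K)]
        nlinarith
      refine ⟨le_antisymm ?_ (Finset.inf'_le _ hmem),
        hsec_nonneg p ys zs hp0 hp1 hz0 (K - 1) hK1z⟩
      apply Finset.le_inf'
      intro k hk
      have hk' := Finset.mem_Icc.mp hk
      exact A k (K - 1) hk'.2 (by omega)
  · have hz00 : zs = 0 := le_antisymm (not_lt.mp hzs) hz0
    have hy0 : ys = 0 := le_antisymm (by rw [hz00] at h2; simpa using h2) hy
    have hf : hsec p ys zs = fun _ => (0:ℝ) := by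
      funext k; simp [hsec, hz00, hy0]
    rw [hf]
    simp
end

section
/- With the same setup, if the lifted subadditive inequality defined by C and {k*_i} is violated by (η*, y*, z*) (so that ν(C) < η* ≤ 1) and y*_{i₀} = z*_{i₀} = 0 for some i₀ ∈ C, then ν(C \ {i₀}) ≤ ν(C), i.e., the inequality defined by C \ {i₀} is violated by at least as much. -/
open Finset

/-- The minimizing secant index `k* = ⌊y*/z*⌋` if `z* > 0`, else `1`. -/
noncomputable def kstar (ys zs : ℝ) : ℕ := if 0 < zs then ⌊ys / zs⌋₊ else 1

/-- `ν(C) = 1 - p_C · ω_C`, the right-hand side of the lifted subadditive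
inequality at `(y*, z*)` with the minimizing indices `k*_i`. -/
noncomputable def nuRHS {I : Type*} [Fintype I] [DecidableEq I]
    (p : I → ℝ) (ys zs : I → ℝ) (C : Finset I) : ℝ :=
  1 - (∏ i ∈ C, (1 - p i)) *
    (1 - ((∑ i ∈ (univ.filter (fun i => p i < 1)) \ C,
        hsec (p i) (ys i) (zs i) (kstar (ys i) (zs i))) +
      (∑ i ∈ C, p i * (ys i - zs i)) +
      ∑ i ∈ univ.filter (fun i => p i = 1), zs i))

theorem stmt13 {I : Type*} [Fintype I] [DecidableEq I] (p : I → ℝ)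
    (hp : ∀ i, 0 ≤ p i ∧ p i ≤ 1) (K : ℕ) (hK : 2 ≤ K)
    (ηs : ℝ) (hηs : ηs ≤ 1) (ys zs : I → ℝ)
    (hz : ∀ i, 0 ≤ zs i ∧ zs i ≤ 1)
    (hzy : ∀ i, zs i ≤ ys i) (hyK : ∀ i, ys i ≤ (K : ℝ) * zs i)
    (C : Finset I) (hC : C ⊆ univ.filter (fun i => p i < 1))
    (hviol : nuRHS p ys zs C < ηs)
    (i₀ : I) (hi₀C : i₀ ∈ C) (hy₀ : ys i₀ = 0) (hz₀ : zs i₀ = 0) :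
    nuRHS p ys zs (C.erase i₀) ≤ nuRHS p ys zs C := by
  set F := univ.filter (fun i : I => p i < 1) with hF
  -- the hsec term at i₀ vanishes
  have hsec0 : hsec (p i₀) (ys i₀) (zs i₀) (kstar (ys i₀) (zs i₀)) = 0 := by
    simp [hsec, hy₀, hz₀]
  have hi₀F : i₀ ∈ F := hC hi₀C
  have hcompl : F \ C.erase i₀ = insert i₀ (F \ C) := by
    ext j
    by_cases hj : j = i₀ <;> simp [hj, hi₀F, Finset.mem_erase, hi₀C]
  have hsum1 : (∑ i ∈ F \ C.erase i₀,
      hsec (p i) (ys i) (zs i) (kstar (ys i) (zs i)))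
      = ∑ i ∈ F \ C, hsec (p i) (ys i) (zs i) (kstar (ys i) (zs i)) := by
    rw [hcompl, Finset.sum_insert (by simp [hi₀C]), hsec0, zero_add]
  have hsum2 : (∑ i ∈ C, p i * (ys i - zs i))
      = ∑ i ∈ C.erase i₀, p i * (ys i - zs i) := by
    rw [← Finset.add_sum_erase _ _ hi₀C, hy₀, hz₀]
    simp
  set ω : ℝ := 1 - ((∑ i ∈ F \ C,
        hsec (p i) (ys i) (zs i) (kstar (ys i) (zs i))) +
      (∑ i ∈ C, p i * (ys i - zs i)) +
      ∑ i ∈ univ.filter (fun i => p i = 1), zs i) with hω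
  have hnuC : nuRHS p ys zs C = 1 - (∏ i ∈ C, (1 - p i)) * ω := rfl
  have hnuE : nuRHS p ys zs (C.erase i₀) = 1 - (∏ i ∈ C.erase i₀, (1 - p i)) * ω := by
    rw [nuRHS, hω, hsum1, hsum2]
  have hPpos : 0 < ∏ i ∈ C, (1 - p i) := by
    apply Finset.prod_pos
    intro i hi
    have := hC hi
    simp [hF] at this
    linarith
  have hPEpos : 0 < ∏ i ∈ C.erase i₀, (1 - p i) := by
    apply Finset.prod_pos
    intro i hi
    have := hC (Finset.mem_of_mem_erase hi)
    simp [hF] at this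
    linarith
  have hωpos : 0 < ω := by
    have h1 : 1 - (∏ i ∈ C, (1 - p i)) * ω < 1 := by
      rw [← hnuC]; linarith
    nlinarith
  have hfac : (∏ i ∈ C, (1 - p i)) = (1 - p i₀) * ∏ i ∈ C.erase i₀, (1 - p i) :=
    (Finset.mul_prod_erase C _ hi₀C).symm
  have hp0 := (hp i₀).1
  rw [hnuC, hnuE, hfac]
  nlinarith [hPEpos, hωpos, mul_pos hPEpos hωpos]
end

section
/- Let p : {0,1,…,n} → [0,1] with p_0 = 0 and p_1 ≤ p_2 ≤ ⋯ ≤ p_n, and let z* ∈ [0,1]^n. Define F_ℓ(z*) = p_ℓ + ∑_{i=ℓ+1}^{n}(p_i - p_ℓ) z*_i for ℓ ∈ {0,…,n}. Then F_ℓ(z*) - F_{ℓ-1}(z*) = (p_ℓ - p_{ℓ-1})(1 - ∑_{i=ℓ}^n z*_i) for all ℓ ∈ {1,…,n}. Consequently, if ∑_{i=1}^n z*_i < 1 then ℓ = 0 minimizes F_ℓ(z*); otherwise any ℓ* with ∑_{i=ℓ*+1}^n z*_i < 1 ≤ ∑_{i=ℓ*}^n z*_i minimizes F_ℓ(z*).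 -/
open Finset

/-- `F_ℓ(z*) = p_ℓ + ∑_{i=ℓ+1}^{n} (p_i - p_ℓ) z*_i`, the right-hand side of the
submodular inequality evaluated at `z*`. -/
noncomputable def Fsub (p z : ℕ → ℝ) (n ℓ : ℕ) : ℝ :=
  p ℓ + ∑ i ∈ Finset.Icc (ℓ + 1) n, (p i - p ℓ) * z i

theorem stmt14 (n : ℕ) (p : ℕ → ℝ) (hp0 : p 0 = 0)
    (hp : ∀ i, i ≤ n → 0 ≤ p i ∧ p i ≤ 1)
    (hmono : ∀ i j, i ≤ j → j ≤ n → p i ≤ p j)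
    (z : ℕ → ℝ) (hz : ∀ i, 0 ≤ z i ∧ z i ≤ 1) :
    (∀ ℓ, 1 ≤ ℓ → ℓ ≤ n →
        Fsub p z n ℓ - Fsub p z n (ℓ - 1) =
          (p ℓ - p (ℓ - 1)) * (1 - ∑ i ∈ Finset.Icc ℓ n, z i)) ∧
    ((∑ i ∈ Finset.Icc 1 n, z i < 1) → ∀ ℓ ≤ n, Fsub p z n 0 ≤ Fsub p z n ℓ) ∧
    (∀ ℓs, 1 ≤ ℓs → ℓs ≤ n →
        (∑ i ∈ Finset.Icc (ℓs + 1) n, z i < 1) →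
        (1 ≤ ∑ i ∈ Finset.Icc ℓs n, z i) →
        ∀ ℓ ≤ n, Fsub p z n ℓs ≤ Fsub p z n ℓ) := by
  -- splitting the first term off a sum over Icc
  have hsplit : ∀ (m : ℕ) (f : ℕ → ℝ), m + 1 ≤ n →
      ∑ i ∈ Finset.Icc (m + 1) n, f i = f (m + 1) + ∑ i ∈ Finset.Icc (m + 2) n, f i := by
    intro m f hm
    have h1 : Finset.Icc (m + 2) n = Finset.Ioc (m + 1) n := (Finset.Icc_add_one_left_eq_Ioc _ _)
    have h2 : insert (m + 1) (Finset.Ioc (m + 1) n) = Finset.Icc (m + 1) n :=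
      Finset.Ioc_insert_left hm
    rw [h1, ← h2, Finset.sum_insert (by simp)]
  -- the difference formula, phrased with successor
  have hdiff : ∀ m : ℕ, m + 1 ≤ n →
      Fsub p z n (m + 1) - Fsub p z n m =
        (p (m + 1) - p m) * (1 - ∑ i ∈ Finset.Icc (m + 1) n, z i) := by
    intro m hm
    unfold Fsub
    rw [hsplit m (fun i => (p i - p m) * z i) hm,
        hsplit m z hm]
    have e1 : ∑ i ∈ Finset.Icc (m + 2) n, (p i - p (m + 1)) * z i
        - ∑ i ∈ Finset.Icc (m + 2) n, (p i - p m) * z i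
        = -((p (m + 1) - p m) * ∑ i ∈ Finset.Icc (m + 2) n, z i) := by
      rw [← Finset.sum_sub_distrib, Finset.mul_sum, ← Finset.sum_neg_distrib]
      apply Finset.sum_congr rfl
      intro i _
      ring
    have := e1
    nlinarith [e1]
  -- monotonicity of tail sums
  have hS : ∀ a b : ℕ, a ≤ b →
      ∑ i ∈ Finset.Icc b n, z i ≤ ∑ i ∈ Finset.Icc a n, z i := by
    intro a b hab
    apply Finset.sum_le_sum_of_subset_of_nonneg
    · exact Finset.Icc_subset_Icc_left hab
    · intro i _ _; exact (hz i).1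
  -- F is monotone increasing above a once the tail sum past a is < 1
  have hup : ∀ a b : ℕ, a ≤ b → b ≤ n →
      (∑ i ∈ Finset.Icc (a + 1) n, z i < 1) → Fsub p z n a ≤ Fsub p z n b := by
    intro a b hab hbn hlt
    induction b with
    | zero =>
      have : a = 0 := by omega
      subst this; exact le_refl _
    | succ b ih =>
      rcases Nat.lt_or_ge a (b + 1) with h | h
      · have hab' : a ≤ b := Nat.lt_succ_iff.mp h
        have step : Fsub p z n b ≤ Fsub p z n (b + 1) := by
          have hd := hdiff b hbn
          have hp' : p b ≤ p (b + 1) := hmono b (b + 1) (Nat.le_succ b) hbn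
          have hS' : ∑ i ∈ Finset.Icc (b + 1) n, z i ≤
              ∑ i ∈ Finset.Icc (a + 1) n, z i := hS (a + 1) (b + 1) (by omega)
          nlinarith
        exact le_trans (ih hab' (by omega)) step
      · have : a = b + 1 := by omega
        subst this; exact le_refl _
  -- F is decreasing up to b once the tail sum from b is ≥ 1
  have hdown : ∀ a b : ℕ, a ≤ b → b ≤ n →
      (1 ≤ ∑ i ∈ Finset.Icc b n, z i) → Fsub p z n b ≤ Fsub p z n a := by
    intro a b hab hbn hge
    induction b with
    | zero =>
      have : a = 0 := by omega
      subst this; exact le_refl _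
    | succ b ih =>
      rcases Nat.lt_or_ge a (b + 1) with h | h
      · have hab' : a ≤ b := Nat.lt_succ_iff.mp h
        have step : Fsub p z n (b + 1) ≤ Fsub p z n b := by
          have hd := hdiff b hbn
          have hp' : p b ≤ p (b + 1) := hmono b (b + 1) (Nat.le_succ b) hbn
          nlinarith
        have hge' : 1 ≤ ∑ i ∈ Finset.Icc b n, z i :=
          le_trans hge (hS b (b + 1) (Nat.le_succ b))
        exact le_trans step (ih hab' (by omega) hge')
      · have : a = b + 1 := by omega
        subst this; exact le_refl _
  refine ⟨?_, ?_, ?_⟩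
  · intro ℓ h1 h2
    obtain ⟨m, rfl⟩ : ∃ m, ℓ = m + 1 := ⟨ℓ - 1, by omega⟩
    simpa using hdiff m h2
  · intro hlt ℓ hℓ
    exact hup 0 ℓ (Nat.zero_le _) hℓ (by simpa using hlt)
  · intro ℓs h1 h2 hlt hge ℓ hℓ
    rcases Nat.le_total ℓs ℓ with h | h
    · exact hup ℓs ℓ h hℓ hlt
    · exact hdown ℓ ℓs h h2 hge
end

section
/- Let I be finite with partition I_P, I_F (p_i < 1 on I_P, p_i = 1 on I_F), K ≥ 2, y* ∈ ℤ_{≥0}^I, and let a_i(y*) = -ln(1-p_i)·∏_{ℓ∈I_P}(1-p_ℓ)^{y*_ℓ} for i ∈ I_P and c(y*) = 1 - ∏_{i∈I_P}(1-p_i)^{y*_i} + (∏_{ℓ∈I_P}(1-p_ℓ)^{y*_ℓ})∑_{i∈I_P} ln(1-p_i) y*_i. Let L = {i ∈ I_P : a_i(y*) ≥ 1 - c(y*)}. Then the enhanced outer-approximation inequality η ≤ c(y*) + ∑_{i∈I_P\L} a_i(y*) y_i + (1 - c(y*)) ∑_{i∈I_F∪L} z_i is valid for all (η,y,z) ∈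 ℝ × ℤ_{≥0}^I × {0,1}^I with η ≤ 1 - ∏_{i∈I}(1-p_i)^{y_i} and z_i ≤ y_i ≤ K z_i for all i ∈ I. -/
open Finset

/-- Constant term `c(y*)` of the outer-approximation inequality. -/
noncomputable def cOA {I : Type*} [Fintype I] (p : I → ℝ) (ys : I → ℕ) : ℝ :=
  1 - (∏ i ∈ univ.filter (fun i => p i < 1), (1 - p i) ^ (ys i)) +
    (∏ i ∈ univ.filter (fun i => p i < 1), (1 - p i) ^ (ys i)) *
      ∑ i ∈ univ.filter (fun i => p i < 1), Real.log (1 - p i) * (ys i : ℝ)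

/-- Coefficient `a_i(y*)` of the outer-approximation inequality. -/
noncomputable def aOA {I : Type*} [Fintype I] (p : I → ℝ) (ys : I → ℕ) (i : I) : ℝ :=
  -Real.log (1 - p i) * ∏ ℓ ∈ univ.filter (fun i => p i < 1), (1 - p ℓ) ^ (ys ℓ)

theorem stmt15 {I : Type*} [Fintype I] [DecidableEq I] (p : I → ℝ)
    (hp : ∀ i, 0 ≤ p i ∧ p i ≤ 1) (K : ℕ) (hK : 2 ≤ K)
    (ys : I → ℕ) (η : ℝ) (y z : I → ℕ) (hz : ∀ i, z i ≤ 1)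
    (hzy : ∀ i, z i ≤ y i) (hyK : ∀ i, y i ≤ K * z i)
    (hη : η ≤ 1 - ∏ i, (1 - p i) ^ (y i)) :
    η ≤ cOA p ys +
      (∑ i ∈ (univ.filter (fun i => p i < 1)) \
          ((univ.filter (fun i => p i < 1)).filter (fun i => 1 - cOA p ys ≤ aOA p ys i)),
        aOA p ys i * (y i : ℝ)) +
      (1 - cOA p ys) *
        ∑ i ∈ (univ.filter (fun i => p i = 1)) ∪
          ((univ.filter (fun i => p i < 1)).filter (fun i => 1 - cOA p ys ≤ aOA p ys i)),
          (z i : ℝ) := by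
  classical
  set F : Finset I := univ.filter (fun i => p i < 1) with hF
  set L : Finset I := F.filter (fun i => 1 - cOA p ys ≤ aOA p ys i) with hL
  set U : Finset I := (univ.filter (fun i => p i = 1)) ∪ L with hU
  have hq : ∀ i ∈ F, 0 < 1 - p i := by
    intro i hi
    rw [hF, mem_filter] at hi
    linarith [hi.2]
  set P : ℝ := ∏ i ∈ F, (1 - p i) ^ (ys i) with hPdef
  have hPpos : 0 < P := prod_pos fun i hi => pow_pos (hq i hi) _
  have hlog : ∀ i ∈ F, Real.log (1 - p i) ≤ 0 := fun i hi =>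
    Real.log_nonpos (by linarith [hq i hi]) (by linarith [(hp i).1])
  have hSys : (∑ i ∈ F, Real.log (1 - p i) * (ys i : ℝ)) ≤ 0 :=
    sum_nonpos fun i hi => mul_nonpos_of_nonpos_of_nonneg (hlog i hi) (Nat.cast_nonneg _)
  have hcdef : cOA p ys = 1 - P + P * ∑ i ∈ F, Real.log (1 - p i) * (ys i : ℝ) := rfl
  have hc1 : cOA p ys ≤ 1 := by
    rw [hcdef]
    nlinarith [mul_nonpos_of_nonneg_of_nonpos hPpos.le hSys]
  have ha : ∀ i ∈ F, 0 ≤ aOA p ys i := by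
    intro i hi
    have : 0 ≤ -Real.log (1 - p i) := by linarith [hlog i hi]
    exact mul_nonneg this hPpos.le
  by_cases hcase : ∀ i ∈ U, y i = 0
  · -- all y vanish on I_F ∪ L : reduce to standard OA inequality
    have hzsum : (∑ i ∈ U, (z i : ℝ)) = 0 := by
      apply sum_eq_zero
      intro i hi
      have : z i = 0 := Nat.le_zero.mp (hcase i hi ▸ hzy i)
      simp [this]
    have hsum_ext : (∑ i ∈ F \ L, aOA p ys i * (y i : ℝ)) =
        ∑ i ∈ F, aOA p ys i * (y i : ℝ) := by
      apply sum_subset (sdiff_subset)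
      intro i hiF hni
      have hiL : i ∈ L := by
        by_contra h
        exact hni (mem_sdiff.mpr ⟨hiF, h⟩)
      have : y i = 0 := hcase i (mem_union_right _ hiL)
      simp [this]
    have hprod : (∏ i, (1 - p i) ^ (y i)) = ∏ i ∈ F, (1 - p i) ^ (y i) := by
      symm
      apply prod_subset (subset_univ F)
      intro i _ hni
      have hp1 : p i = 1 := by
        rw [hF, mem_filter] at hni
        push_neg at hni
        have := hni (mem_univ i)
        linarith [(hp i).2]
      have : y i = 0 := hcase i (mem_union_left _ (by simp [hp1]))
      simp [this]
    -- exponential form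
    have hexp : ∀ w : I → ℕ, (∏ i ∈ F, (1 - p i) ^ (w i)) =
        Real.exp (∑ i ∈ F, (w i : ℝ) * Real.log (1 - p i)) := by
      intro w
      rw [Real.exp_sum]
      refine prod_congr rfl fun i hi => ?_
      rw [Real.exp_nat_mul, Real.exp_log (hq i hi)]
    set Sy : ℝ := ∑ i ∈ F, (y i : ℝ) * Real.log (1 - p i) with hSy
    set Sys : ℝ := ∑ i ∈ F, (ys i : ℝ) * Real.log (1 - p i) with hSysdef
    have hPe : P = Real.exp Sys := hexp ys
    have hkey : P * (1 + (Sy - Sys)) ≤ ∏ i ∈ F, (1 - p i) ^ (y i) := by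
      rw [hexp y, hPe]
      have h1 : (Sy - Sys) + 1 ≤ Real.exp (Sy - Sys) := Real.add_one_le_exp _
      have h2 : Real.exp Sys * Real.exp (Sy - Sys) = Real.exp Sy := by
        rw [← Real.exp_add]; ring_nf
      nlinarith [Real.exp_pos Sys]
    have hay : (∑ i ∈ F, aOA p ys i * (y i : ℝ)) = -P * Sy := by
      rw [hSy, Finset.mul_sum]
      refine sum_congr rfl fun i hi => ?_
      show -Real.log (1 - p i) * P * (y i : ℝ) = -P * ((y i : ℝ) * Real.log (1 - p i))
      ring
    have hSys2 : (∑ i ∈ F, Real.log (1 - p i) * (ys i : ℝ)) = Sys := by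
      rw [hSysdef]
      exact sum_congr rfl fun i _ => by ring
    rw [hsum_ext, hzsum, mul_zero, add_zero, hay, hcdef, hSys2]
    rw [hprod] at hη
    nlinarith [hkey]
  · -- some y i₀ ≥ 1 with i₀ ∈ I_F ∪ L
    push_neg at hcase
    obtain ⟨i₀, hi₀U, hy₀⟩ := hcase
    have hz₀ : z i₀ = 1 := by
      rcases Nat.eq_zero_or_pos (z i₀) with h | h
      · exfalso; have := hyK i₀; rw [h, Nat.mul_zero] at this; omega
      · have := hz i₀; omega
    have hzsum : (1 : ℝ) ≤ ∑ i ∈ U, (z i : ℝ) := by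
      have := single_le_sum (f := fun i => (z i : ℝ))
        (fun i _ => Nat.cast_nonneg _) hi₀U
      simpa [hz₀] using this
    have hanonneg : 0 ≤ ∑ i ∈ F \ L, aOA p ys i * (y i : ℝ) :=
      sum_nonneg fun i hi =>
        mul_nonneg (ha i (mem_sdiff.mp hi).1) (Nat.cast_nonneg _)
    have hη1 : η ≤ 1 := by
      have : (0 : ℝ) ≤ ∏ i, (1 - p i) ^ (y i) :=
        prod_nonneg fun i _ => pow_nonneg (by linarith [(hp i).2]) _
      linarith
    nlinarith [mul_le_mul_of_nonneg_left hzsum (by linarith : (0:ℝ) ≤ 1 - cOA p ys)]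
end

section
/- Let p ∈ [0,1). For all y ∈ ℤ_{≥0} and z ∈ {0,1} with z ≤ y ≤ K z (K ≥ 2) and for any k ∈ {1,…,K-1}, one has (1-p)^y ≥ (1-p)^k(kp+1) z - p(1-p)^k y + (1 - z). In particular, if z = 1 and y = k, equality 1-(1-p)^y = h_k(y,z) holds in the secant bound. -/
theorem stmt17 (p : ℝ) (hp : 0 ≤ p ∧ p < 1) (K : ℕ) (hK : 2 ≤ K)
    (y z : ℕ) (hz : z ≤ 1) (h1 : z ≤ y) (h2 : y ≤ K * z)
    (k : ℕ) (hk : 1 ≤ k ∧ k ≤ K - 1) :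
    ((1 - p) ^ k * ((k : ℝ) * p + 1) * (z : ℝ) - p * (1 - p) ^ k * (y : ℝ) +
        (1 - (z : ℝ)) ≤ (1 - p) ^ y) ∧
    (z = 1 → y = k →
      1 - (1 - p) ^ y =
        p * (1 - p) ^ k * (y : ℝ) + (1 - (1 - p) ^ k * ((k : ℝ) * p + 1)) * (z : ℝ)) := by
  obtain ⟨hp0, hp1⟩ := hp
  have hq : (0:ℝ) < 1 - p := by linarith
  constructor
  · interval_cases z
    · have hy : y = 0 := by omega
      subst hy; simp
    · rcases le_or_gt k y with h | h
      · obtain ⟨m, rfl⟩ := Nat.exists_eq_add_of_le h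
        have hb : 1 + (m:ℝ) * (-p) ≤ (1 + (-p)) ^ m :=
          one_add_mul_le_pow (by linarith) m
        have hkpos : (0:ℝ) < (1 - p) ^ k := pow_pos hq k
        have hb' : 1 - (m:ℝ) * p ≤ (1 - p) ^ m := by
          rw [show (1:ℝ) - p = 1 + (-p) by ring]; linarith
        have : (1 - p) ^ k * (1 - (m:ℝ) * p) ≤ (1 - p) ^ k * (1 - p) ^ m :=
          mul_le_mul_of_nonneg_left hb' hkpos.le
        push_cast
        rw [pow_add]
        nlinarith
      · obtain ⟨m, rfl⟩ : ∃ m, k = y + m := ⟨k - y, by omega⟩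
        have hb : 1 + (m:ℝ) * p ≤ (1 + p) ^ m := one_add_mul_le_pow (by linarith) m
        have hypos : (0:ℝ) < (1 - p) ^ y := pow_pos hq y
        have hmpos : (0:ℝ) < (1 - p) ^ m := pow_pos hq m
        have h3 : (1 - p) ^ m * (1 + (m:ℝ) * p) ≤ (1 - p) ^ m * (1 + p) ^ m :=
          mul_le_mul_of_nonneg_left hb hmpos.le
        have h4 : (1 - p) ^ m * (1 + p) ^ m = (1 - p ^ 2) ^ m := by
          rw [← mul_pow]; ring_nf
        have h5 : (1 - p ^ 2) ^ m ≤ 1 := by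
          apply pow_le_one₀ <;> nlinarith
        have h6 : (1 - p) ^ m * (1 + (m:ℝ) * p) ≤ 1 := by
          calc (1 - p) ^ m * (1 + (m:ℝ) * p) ≤ (1 - p ^ 2) ^ m := by rw [← h4]; exact h3
            _ ≤ 1 := h5
        push_cast
        rw [pow_add]
        nlinarith
  · rintro rfl rfl
    push_cast
    ring
end
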